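/- The ratio ⟨a,b,c,d⟩° / ⟨a,b,c⟩° equals ∑_{k=0}^{m} (-1)^{d+k} C(a,k)C(b,k)C(c,k)·C(1+a+b+c+d-k, d-k) / (C(a+d,d)C(b+d,d)C(c+d,d)), where ⟨a,b,c⟩° and ⟨a,b,c,d⟩° are defined as in Proposition 5.1 and m = min{a,b,c,d}. -/

import Mathlib

open Nat Finset

/-- The three-circle chromatic evaluation `⟨a,b,c⟩°` (Eq. 5.3). -/
noncomputable def threeCircle (a b c : ℕ) : ℚ :=
  (-1 : ℚ) ^ (a + b + c) *
    ((a ! : ℚ) * (b ! : ℚ) * (c ! : ℚ) * ((a + b + c + 1)! : ℚ)) /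
    (((a + b)! : ℚ) * ((b + c)! : ℚ) * ((c + a)! : ℚ))

/-- The Descartes four-circle chromatic evaluation `⟨a,b,c,d⟩°` (Eq. 5.4). -/
noncomputable def fourCircle (a b c d : ℕ) : ℚ :=
  ∑ k ∈ range (min a (min b (min c d)) + 1),
    (-1 : ℚ) ^ (a + b + c + d + k) *
      ((a.choose k : ℚ) * (b.choose k : ℚ) * (c.choose k : ℚ) * (d.choose k : ℚ) *
        (((a + b + c + d + 1)! : ℚ) /
          ((a ! : ℚ) * (b ! : ℚ) * (c ! : ℚ) * (d ! : ℚ) * (1! : ℚ)))) /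
      (((a + b).choose a : ℚ) * ((a + c).choose a : ℚ) * ((a + d).choose a : ℚ) *
        ((b + c).choose b : ℚ) * ((b + d).choose b : ℚ) * ((c + d).choose c : ℚ) *
        ((a + b + c + d + 1).choose k : ℚ))

/-
Compare the two sides term by term, with S = a+b+c+d. Writing binomials as quotients of factorials,
⟨a,b,c⟩° = (-1)^(a+b+c) (a+b+c+1)!/(a! b! c!) / (C(a+b,a) C(a+c,a) C(b+c,b)), and
(S+1)!/(a! b! c! d!) = (a+b+c+1)!/(a! b! c!) · C(S+1,d). After cancelling, the k-th quotient
carries the factor C(d,k) C(S+1,d) / C(S+1,k), which equals C(S+1-k, d-k) by the identity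
C(n,d) C(d,k) = C(n,k) C(n-k,d-k).
-/

theorem Nat.cast_choose_mul_choose_div_choose {K : Type*} [Field K] [CharZero K] {n d k : ℕ}
    (hkd : k ≤ d) (hdn : d ≤ n) :
    (d.choose k : K) * n.choose d / n.choose k = (n - k).choose (d - k) := by
  rw [div_eq_iff (Nat.cast_ne_zero.2 (Nat.choose_ne_zero (hkd.trans hdn))),
    mul_comm (d.choose k : K), mul_comm _ (n.choose k : K)]
  exact_mod_cast Nat.choose_mul hkd

theorem Nat.cast_add_factorial_div {K : Type*} [Field K] [CharZero K] (m d : ℕ) (x : K) :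
    ((m + d)! : K) / (x * d !) = m ! / x * (m + d).choose d := by
  rw [← Nat.add_choose_mul_factorial_mul_factorial]
  push_cast
  rw [mul_div_mul_right _ _ (Nat.cast_ne_zero.2 (Nat.factorial_ne_zero d))]
  ring

theorem threeCircle_eq (a b c : ℕ) :
    threeCircle a b c = (-1 : ℚ) ^ (a + b + c) * ((a + b + c + 1)! / (a ! * b ! * c ! * 1 !)) /
      ((a + b).choose a * (a + c).choose a * (b + c).choose b) := by
  rw [threeCircle, Nat.cast_add_choose, Nat.cast_add_choose, Nat.cast_add_choose, add_comm c a,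
    Nat.factorial_one, Nat.cast_one, mul_one]
  field_simp

theorem fourCircle_term_div_threeCircle {a b c d k : ℕ} (hk : k ≤ d) :
    (-1 : ℚ) ^ (a + b + c + d + k) *
      ((a.choose k : ℚ) * (b.choose k : ℚ) * (c.choose k : ℚ) * (d.choose k : ℚ) *
        (((a + b + c + d + 1)! : ℚ) /
          ((a ! : ℚ) * (b ! : ℚ) * (c ! : ℚ) * (d ! : ℚ) * (1! : ℚ)))) /
      (((a + b).choose a : ℚ) * ((a + c).choose a : ℚ) * ((a + d).choose a : ℚ) *
        ((b + c).choose b : ℚ) * ((b + d).choose b : ℚ) * ((c + d).choose c : ℚ) *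
        ((a + b + c + d + 1).choose k : ℚ)) / threeCircle a b c
      = (-1 : ℚ) ^ (d + k) *
            ((a.choose k : ℚ) * (b.choose k : ℚ) * (c.choose k : ℚ) *
              ((1 + a + b + c + d - k).choose (d - k) : ℚ)) /
            (((a + d).choose d : ℚ) * ((b + d).choose d : ℚ) * ((c + d).choose d : ℚ)) := by
  have hfact : ((a + b + c + d + 1)! : ℚ) / (a ! * b ! * c ! * d ! * 1 !) =
      (a + b + c + 1)! / (a ! * b ! * c ! * 1 !) * (a + b + c + d + 1).choose d := by
    rw [show a + b + c + d + 1 = a + b + c + 1 + d by ring, ← Nat.cast_add_factorial_div,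
      mul_right_comm _ (d ! : ℚ)]
  have hchoose : ((1 + a + b + c + d - k).choose (d - k) : ℚ) =
      d.choose k * (a + b + c + d + 1).choose d / (a + b + c + d + 1).choose k := by
    rw [show 1 + a + b + c + d = a + b + c + d + 1 by omega,
      Nat.cast_choose_mul_choose_div_choose hk (by omega)]
  have hsign : (-1 : ℚ) ^ (a + b + c + d + k) = (-1) ^ (a + b + c) * (-1) ^ (d + k) := by
    rw [← pow_add, show a + b + c + d + k = a + b + c + (d + k) by ring]
  rw [hfact, hchoose, hsign, threeCircle_eq, @Nat.choose_symm_add a d, @Nat.choose_symm_add b d,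
    @Nat.choose_symm_add c d]
  have hchoose_ne {m n : ℕ} (h : m ≤ n) : (n.choose m : ℚ) ≠ 0 :=
    Nat.cast_ne_zero.2 (Nat.choose_ne_zero h)
  have := hchoose_ne (show k ≤ a + b + c + d + 1 by omega)
  have := hchoose_ne (Nat.le_add_right a b)
  have := hchoose_ne (Nat.le_add_right a c)
  have := hchoose_ne (Nat.le_add_right b c)
  have := hchoose_ne (Nat.le_add_left d a)
  have := hchoose_ne (Nat.le_add_left d b)
  have := hchoose_ne (Nat.le_add_left d c)
  field_simp

theorem stmt_11 (a b c d : ℕ) :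
    fourCircle a b c d / threeCircle a b c
      = ∑ k ∈ range (min a (min b (min c d)) + 1),
          (-1 : ℚ) ^ (d + k) *
            ((a.choose k : ℚ) * (b.choose k : ℚ) * (c.choose k : ℚ) *
              ((1 + a + b + c + d - k).choose (d - k) : ℚ)) /
            (((a + d).choose d : ℚ) * ((b + d).choose d : ℚ) * ((c + d).choose d : ℚ)) := by
  rw [fourCircle, sum_div]
  refine sum_congr rfl fun k hk => fourCircle_term_div_threeCircle ?_
  have := mem_range.1 hk
  omega
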